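/- arXiv:2102.11913 — 4 statements merged into one kernel-verified Lean document; each statement's English description precedes it below -/
import Mathlib

section
/- On the set 𝒩 of supernatural numbers, the topology τ₄ generated by the sets {ν : ν > ν_n} (n ∈ ℕ⁺) is contained in the topology τ₁ generated by the sets {ν : ν(p) > k} (p prime, k ∈ ℕ), but τ₁ is not contained in τ₄; in particular the two topologies differ. -/
/-- Supernatural numbers: functions from primes to ℕ ∪ {∞}, ordered pointwise. -/
abbrev Supernatural := Nat.Primes → ℕ∞

/-- The finite supernatural number associated to a natural number `n`. -/
noncomputable def nu (n : ℕ) : Supernatural := fun p => ((n.factorization p : ℕ) : ℕ∞)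

/-- `τ₁`: the topology generated by the sets `{ν : ν(p) > k}` (`p` prime, `k ∈ ℕ`). -/
noncomputable def tau1 : TopologicalSpace Supernatural :=
  TopologicalSpace.generateFrom
    {U | ∃ (p : Nat.Primes) (k : ℕ), U = {ν : Supernatural | (k : ℕ∞) < ν p}}

/-- `τ₄`: the topology generated by the sets `{ν : ν > ν_n}` (`n ∈ ℕ⁺`). -/
noncomputable def tau4 : TopologicalSpace Supernatural :=
  TopologicalSpace.generateFrom
    {U | ∃ n : ℕ+, U = {ν : Supernatural | nu (n : ℕ) < ν}}

open TopologicalSpace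

lemma gen_open (n : ℕ) :
    @IsOpen _ tau1 {ν : Supernatural | nu n < ν} := by
  letI := tau1
  set F : Set Nat.Primes := {q | n.factorization q ≠ 0} with hF
  have hFfin : F.Finite := by
    have : F ⊆ (fun q : Nat.Primes => (q : ℕ)) ⁻¹' ↑n.factorization.support := by
      intro q hq
      show (q : ℕ) ∈ n.factorization.support
      rw [Finsupp.mem_support_iff]
      exact hq
    exact Set.Finite.subset (Set.Finite.preimage (Subtype.val_injective.injOn)
      n.factorization.support.finite_toSet) this
  have key : {ν : Supernatural | nu n < ν} =
      ⋃ p : Nat.Primes, ({ν : Supernatural | (n.factorization p : ℕ∞) < ν p} ∩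
        ⋂ q ∈ F, {ν : Supernatural | ((n.factorization q - 1 : ℕ) : ℕ∞) < ν q}) := by
    ext ν
    simp only [Set.mem_setOf_eq, Set.mem_iUnion, Set.mem_inter_iff, Set.mem_iInter, Pi.lt_def]
    constructor
    · rintro ⟨hle, p, hp⟩
      refine ⟨p, hp, fun q hq => ?_⟩
      have h1 : 1 ≤ n.factorization q := Nat.one_le_iff_ne_zero.mpr hq
      have : ((n.factorization q - 1 : ℕ) : ℕ∞) + 1 ≤ ν q := by
        have : (((n.factorization q - 1) + 1 : ℕ) : ℕ∞) ≤ ν q := by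
          rw [Nat.sub_add_cancel h1]; exact hle q
        simpa using this
      exact (ENat.add_one_le_iff (by simp)).mp this
    · rintro ⟨p, hp, hall⟩
      refine ⟨fun q => ?_, p, hp⟩
      by_cases hq : n.factorization q = 0
      · simp [nu, hq]
      · have := hall q hq
        have h1 : 1 ≤ n.factorization q := Nat.one_le_iff_ne_zero.mpr hq
        have h2 : ((n.factorization q - 1 : ℕ) : ℕ∞) + 1 ≤ ν q :=
          ENat.add_one_le_iff (by simp) |>.mpr this
        have : (((n.factorization q - 1) + 1 : ℕ) : ℕ∞) ≤ ν q := by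
          push_cast; exact h2
        rwa [Nat.sub_add_cancel h1] at this
  rw [key]
  refine isOpen_iUnion fun p => IsOpen.inter ?_ ?_
  · exact isOpen_generateFrom_of_mem ⟨p, n.factorization p, rfl⟩
  · exact Set.Finite.isOpen_biInter hFfin fun q hq =>
      isOpen_generateFrom_of_mem ⟨q, n.factorization q - 1, rfl⟩

def p0 : Nat.Primes := ⟨2, Nat.prime_two⟩
def q0 : Nat.Primes := ⟨3, Nat.prime_three⟩

noncomputable def nustar : Supernatural := fun q => if q = p0 then 1 else 0
noncomputable def nupr : Supernatural := fun q => if q = q0 then 1 else 0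

lemma p0_ne_q0 : p0 ≠ q0 := by
  intro h
  have : (2 : ℕ) = 3 := congrArg Subtype.val h
  omega

lemma push_mem (s : Set Supernatural) (hs : @IsOpen _ tau4 s) :
    nustar ∈ s → nupr ∈ s := by
  have hs' : GenerateOpen {U | ∃ n : ℕ+, U = {ν : Supernatural | nu (n : ℕ) < ν}} s := hs
  clear hs
  induction hs' with
  | basic u hu =>
    obtain ⟨n, rfl⟩ := hu
    intro h
    have h' : nu (n : ℕ) < nustar := h
    have hzero : ∀ q, nu (n : ℕ) q = 0 := by
      intro q
      by_cases hq : q = p0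
      · subst hq
        by_contra hc
        have h1 : nu (n : ℕ) p0 ≤ 1 := by
          have := h'.le p0
          simpa [nustar] using this
        have hk : ((n : ℕ).factorization p0 : ℕ) ≤ 1 := by
          simp only [nu] at h1; exact_mod_cast h1
        have hk1 : (n : ℕ).factorization p0 = 1 := by
          have : (n : ℕ).factorization p0 ≠ 0 := by
            intro h0; exact hc (by simp [nu, h0])
          omega
        have : nu (n : ℕ) = nustar := by
          funext q
          by_cases hq' : q = p0
          · subst hq'; simp [nu, nustar, hk1]
          · have := h'.le q
            simp only [nustar, if_neg hq'] at this
            simpa [nustar, if_neg hq'] using le_antisymm this zero_le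
        exact h'.ne this
      · have := h'.le q
        simp only [nustar, if_neg hq] at this
        exact le_antisymm this zero_le
    refine lt_of_le_of_ne (a := nu (n : ℕ)) (b := nupr) ?_ ?_
    · intro q
      rw [hzero q]; exact zero_le
    intro heq
    have := congrFun heq q0
    rw [hzero q0] at this
    simp [nupr] at this
  | univ => intro _; trivial
  | inter u v hu hv ihu ihv => exact fun h => ⟨ihu h.1, ihv h.2⟩
  | sUnion S hS ih =>
    rintro ⟨t, ht, hmem⟩
    exact ⟨t, ht, ih t ht hmem⟩

/-- Every `τ₄`-open set is `τ₁`-open, but not conversely; in particular `τ₄ ≠ τ₁`. -/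
theorem tau4_strictly_coarser_than_tau1 :
    (∀ s : Set Supernatural, @IsOpen _ tau4 s → @IsOpen _ tau1 s) ∧
    ¬(∀ s : Set Supernatural, @IsOpen _ tau1 s → @IsOpen _ tau4 s) ∧
    tau4 ≠ tau1 := by
  have h1 : ∀ s : Set Supernatural, @IsOpen _ tau4 s → @IsOpen _ tau1 s := by
    intro s hs
    have hs' : GenerateOpen {U | ∃ n : ℕ+, U = {ν : Supernatural | nu (n : ℕ) < ν}} s := hs
    clear hs
    induction hs' with
    | basic u hu => obtain ⟨n, rfl⟩ := hu; exact gen_open n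
    | univ => exact GenerateOpen.univ
    | inter u v hu hv ihu ihv => exact GenerateOpen.inter u v ihu ihv
    | sUnion S hS ih => exact GenerateOpen.sUnion S ih
  have h2 : ¬(∀ s : Set Supernatural, @IsOpen _ tau1 s → @IsOpen _ tau4 s) := by
    intro h
    have hU : @IsOpen _ tau1 {ν : Supernatural | ((0 : ℕ) : ℕ∞) < ν p0} := by
      letI := tau1
      exact isOpen_generateFrom_of_mem ⟨p0, 0, rfl⟩
    have hmem : nustar ∈ {ν : Supernatural | ((0 : ℕ) : ℕ∞) < ν p0} := by
      simp [nustar]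
    have := push_mem _ (h _ hU) hmem
    simp [nupr, p0_ne_q0] at this
  exact ⟨h1, h2, fun heq => h2 (by rw [heq]; exact fun s hs => hs)⟩
end

section
/- On the set 𝒩 of supernatural numbers, the topologies τ₄ (generated by the sets {ν : ν > ν_n}, n ∈ ℕ⁺) and τ₅ (generated by the sets {ν : ν ≰ ν_n}, n ∈ ℕ⁺) are incomparable: neither contains the other. -/
/-- `τ₅`: the topology generated by the sets `{ν : ν ≰ ν_n}` (`n ∈ ℕ⁺`). -/
noncomputable def tau5 : TopologicalSpace Supernatural :=
  TopologicalSpace.generateFrom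
    {U | ∃ n : ℕ+, U = {ν : Supernatural | ¬ ν ≤ nu (n : ℕ)}}

def pp2 : Nat.Primes := ⟨2, Nat.prime_two⟩
def pp3 : Nat.Primes := ⟨3, Nat.prime_three⟩

lemma pp3_ne_pp2 : pp3 ≠ pp2 := by
  intro h
  have := congrArg Subtype.val h
  simp [pp2, pp3] at this

/-- A point lying in every τ₅-generator. -/
noncomputable def mu : Supernatural := fun p => if p = pp2 then 0 else ⊤

lemma mu_mem_tau5 {s : Set Supernatural}
    (h : TopologicalSpace.GenerateOpen
      {U | ∃ n : ℕ+, U = {ν : Supernatural | ¬ ν ≤ nu (n : ℕ)}} s) :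
    ∀ x ∈ s, mu ∈ s := by
  induction h with
  | basic U hU =>
    intro x hx
    obtain ⟨n, rfl⟩ := hU
    intro hle
    have h3 := hle pp3
    simp only [mu, if_neg pp3_ne_pp2, nu, top_le_iff] at h3
    exact (ENat.coe_ne_top _) h3
  | univ => intro x _; trivial
  | inter s t _ _ ihs iht => intro x hx; exact ⟨ihs x hx.1, iht x hx.2⟩
  | sUnion S _ ih =>
    rintro x ⟨t, htS, hxt⟩
    exact ⟨t, htS, ih t htS x hxt⟩

lemma nu3_apply (p : Nat.Primes) : nu 3 p = if p = pp3 then 1 else 0 := by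
  have h3 : Nat.Prime 3 := Nat.prime_three
  simp only [nu, h3.factorization, Finsupp.single_apply]
  rcases eq_or_ne p pp3 with h | h
  · subst h; simp [pp3]; exact (if_pos rfl).symm
  · have : (3 : ℕ) ≠ (p : ℕ) := by
      intro hc
      exact h (Subtype.ext hc.symm)
    simp [this, h]

lemma nu2_apply (p : Nat.Primes) : nu 2 p = if p = pp2 then 1 else 0 := by
  have h2 : Nat.Prime 2 := Nat.prime_two
  simp only [nu, h2.factorization, Finsupp.single_apply]
  rcases eq_or_ne p pp2 with h | h
  · subst h; simp [pp2]; exact (if_pos rfl).symm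
  · have : (2 : ℕ) ≠ (p : ℕ) := by
      intro hc
      exact h (Subtype.ext hc.symm)
    simp [this, h]

lemma nu2_mem_tau4 {s : Set Supernatural}
    (h : TopologicalSpace.GenerateOpen
      {U | ∃ n : ℕ+, U = {ν : Supernatural | nu (n : ℕ) < ν}} s) :
    nu 3 ∈ s → nu 2 ∈ s := by
  induction h with
  | basic U hU =>
    intro hx
    obtain ⟨n, rfl⟩ := hU
    have hlt : nu (n : ℕ) < nu 3 := hx
    -- show nu n = 0
    have hzero : ∀ p, nu (n : ℕ) p = 0 := by
      intro p
      by_contra hne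
      rcases eq_or_ne p pp3 with rfl | hp
      · -- at pp3, nu n pp3 ≤ 1 and nonzero forces nu n = nu 3
        have hle1 : nu (n : ℕ) pp3 ≤ 1 := by
          have := hlt.le pp3
          rwa [nu3_apply, if_pos rfl] at this
        have heq1 : nu (n : ℕ) pp3 = 1 := le_antisymm hle1 (by
          rcases (ENat.one_le_iff_ne_zero).mpr hne with h; exact h)
        have : nu (n : ℕ) = nu 3 := by
          funext q
          rcases eq_or_ne q pp3 with rfl | hq
          · rw [heq1, nu3_apply, if_pos rfl]
          · have := hlt.le q
            rw [nu3_apply, if_neg hq] at this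
            rw [nu3_apply, if_neg hq]
            exact le_antisymm this (zero_le)
        exact hlt.ne this
      · have := hlt.le p
        rw [nu3_apply, if_neg hp] at this
        exact hne (le_antisymm this (zero_le))
    show nu (n : ℕ) < nu 2
    constructor
    · intro p; rw [hzero p]; exact zero_le
    · intro hle
      have := hle pp2
      rw [nu2_apply, if_pos rfl, hzero pp2] at this
      simp at this
  | univ => intro _; trivial
  | inter s t _ _ ihs iht => intro hx; exact ⟨ihs hx.1, iht hx.2⟩
  | sUnion S _ ih =>
    rintro ⟨t, htS, hxt⟩
    exact ⟨t, htS, ih t htS hxt⟩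


lemma nu4_apply (p : Nat.Primes) : nu 4 p = if p = pp2 then 2 else 0 := by
  have h2 : Nat.Prime 2 := Nat.prime_two
  have h4 : (4 : ℕ) = 2 ^ 2 := rfl
  simp only [nu, h4, h2.factorization_pow, Finsupp.single_apply]
  rcases eq_or_ne p pp2 with h | h
  · subst h; simp [pp2]; exact (if_pos rfl).symm
  · have : (2 : ℕ) ≠ (p : ℕ) := fun hc => h (Subtype.ext hc.symm)
    simp [this, h]

lemma coe2 : ((2 : ℕ+) : ℕ) = 2 := rfl

/-- The topologies `τ₄` and `τ₅` are incomparable: neither contains the other. -/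
theorem tau4_tau5_incomparable :
    ¬(∀ s : Set Supernatural, @IsOpen _ tau4 s → @IsOpen _ tau5 s) ∧
    ¬(∀ s : Set Supernatural, @IsOpen _ tau5 s → @IsOpen _ tau4 s) := by
  constructor
  · intro h
    have hopen4 : @IsOpen _ tau4 {ν : Supernatural | nu ((2 : ℕ+) : ℕ) < ν} :=
      TopologicalSpace.GenerateOpen.basic _ ⟨2, rfl⟩
    have hopen5 := h _ hopen4
    have hmem : nu 4 ∈ {ν : Supernatural | nu ((2 : ℕ+) : ℕ) < ν} := by
      show nu ((2 : ℕ+) : ℕ) < nu 4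
      rw [coe2]
      constructor
      · intro p
        rw [nu2_apply, nu4_apply]
        rcases eq_or_ne p pp2 with rfl | hp
        · norm_num
        · simp [hp]
      · intro hle
        have := hle pp2
        rw [nu2_apply, if_pos rfl, nu4_apply, if_pos rfl] at this
        norm_num at this
    have hmu := mu_mem_tau5 hopen5 _ hmem
    have := (show nu ((2 : ℕ+) : ℕ) < mu from hmu).le pp2
    rw [coe2, nu2_apply, if_pos rfl] at this
    simp [mu] at this
  · intro h
    have hopen5 : @IsOpen _ tau5 {ν : Supernatural | ¬ ν ≤ nu ((2 : ℕ+) : ℕ)} :=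
      TopologicalSpace.GenerateOpen.basic _ ⟨2, rfl⟩
    have hopen4 := h _ hopen5
    have hmem : nu 3 ∈ {ν : Supernatural | ¬ ν ≤ nu ((2 : ℕ+) : ℕ)} := by
      intro hle
      have := hle pp3
      rw [coe2, nu3_apply, if_pos rfl, nu2_apply, if_neg pp3_ne_pp2] at this
      simp at this
    have h2 := nu2_mem_tau4 hopen4 hmem
    exact h2 (le_refl _)
end

section
/- Let X and Y be multisets (Boolean spaces equipped with continuous denominator maps into 𝒩), and let x ∈ X, y ∈ Y be such that ζ_X(x) ≥ ζ_Y(y). If ζ_Y(y) is a finite supernatural number and Y contains an element of denominator ν₁ (the bottom supernatural number), then there exists a continuous denominator-decreasing map f : X → Y with f(x) = y. -/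
/-- The topology on supernatural numbers generated by `{ν : ν(p) > k}`. -/
def supernaturalTopology : TopologicalSpace Supernatural :=
  TopologicalSpace.generateFrom
    {U | ∃ (p : Nat.Primes) (k : ℕ), U = {ν : Supernatural | (k : ℕ∞) < ν p}}

/-- A supernatural number is finite if it never takes the value ∞ and is nonzero
only at finitely many primes. -/
def Supernatural.Finite (ν : Supernatural) : Prop :=
  (∀ p, ν p ≠ ⊤) ∧ {p | ν p ≠ 0}.Finite

/-!
For finite `ν`, the condition `ν ≤ μ` only constrains the finitely many primes in the support
of `ν`, each by a basic open condition `ν p - 1 < μ p`; so `{a | ζY y ≤ ζX a}` is an open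
neighbourhood of `x`. It contains a clopen neighbourhood `U` of `x`, and the map sending `U` to
`y` and its complement to a point of denominator `⊥` is the required morphism.
-/

open scoped Topology

namespace Supernatural

theorem isOpen_setOf_coe_le_apply (p : Nat.Primes) (n : ℕ) :
    IsOpen[supernaturalTopology] {μ : Supernatural | (n : ℕ∞) ≤ μ p} := by
  cases n with
  | zero => simp
  | succ k =>
    have hset : {μ : Supernatural | ((k + 1 : ℕ) : ℕ∞) ≤ μ p} = {μ | (k : ℕ∞) < μ p} := by
      ext μ
      simp [ENat.add_one_le_iff (ENat.natCast_ne_top k)]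
    rw [hset]
    exact TopologicalSpace.GenerateOpen.basic _ ⟨p, k, rfl⟩

theorem Finite.isOpen_setOf_le {ν : Supernatural} (hν : ν.Finite) :
    IsOpen[supernaturalTopology] {μ : Supernatural | ν ≤ μ} := by
  have hset : {μ : Supernatural | ν ≤ μ} = ⋂ p ∈ hν.2.toFinset, {μ | ν p ≤ μ p} := by
    ext μ
    simp only [Set.mem_iInter, Set.Finite.mem_toFinset, Pi.le_def]
    refine ⟨fun h p _ => h p, fun h p => ?_⟩
    by_cases hp : ν p = 0
    · simp [hp]
    · exact h p hp
  rw [hset]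
  refine @isOpen_biInter_finset _ _ supernaturalTopology _ _ fun p _ => ?_
  rw [← ENat.natCast_toNat (hν.1 p)]
  exact isOpen_setOf_coe_le_apply p _

end Supernatural

theorem exists_multiset_morphism_general {X Y : Type*}
    [TopologicalSpace X] [CompactSpace X] [T2Space X] [TotallyDisconnectedSpace X]
    [TopologicalSpace Y]
    (ζX : X → Supernatural) (ζY : Y → Supernatural)
    (hζX : @Continuous X Supernatural _ supernaturalTopology ζX)
    (x : X) (y : Y) (hxy : ζY y ≤ ζX x)
    (hfin : (ζY y).Finite) (hbot : ∃ y₁ : Y, ζY y₁ = ⊥) :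
    ∃ f : X → Y, Continuous f ∧ (∀ a : X, ζY (f a) ≤ ζX a) ∧ f x = y := by
  classical
  obtain ⟨y₁, hy₁⟩ := hbot
  have hV : IsOpen {a | ζY y ≤ ζX a} :=
    @Continuous.isOpen_preimage _ _ _ supernaturalTopology _ hζX _ hfin.isOpen_setOf_le
  obtain ⟨U, hU, hxU, hUV⟩ := compact_exists_isClopen_in_isOpen hV hxy
  refine ⟨U.piecewise (fun _ => y) (fun _ => y₁),
    continuous_const.piecewise (by simp [hU.frontier_eq]) continuous_const,
    fun a => ?_, by simp [hxU]⟩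
  by_cases ha : a ∈ U
  · simpa [ha] using hUV ha
  · simp [ha, hy₁]

/-- Given multisets `(X, ζX)` and `(Y, ζY)`, points `x ∈ X`, `y ∈ Y` with
`ζX x ≥ ζY y`, if `ζY y` is finite and `Y` has a point of denominator `ν₁ = ⊥`,
then there is a morphism of multisets `f : X → Y` with `f x = y`. -/
theorem exists_multiset_morphism {X Y : Type*}
    [TopologicalSpace X] [CompactSpace X] [T2Space X] [TotallyDisconnectedSpace X]
    [TopologicalSpace Y] [CompactSpace Y] [T2Space Y] [TotallyDisconnectedSpace Y]
    (ζX : X → Supernatural) (ζY : Y → Supernatural)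
    (hζX : @Continuous X Supernatural _ supernaturalTopology ζX)
    (hζY : @Continuous Y Supernatural _ supernaturalTopology ζY)
    (x : X) (y : Y) (hxy : ζY y ≤ ζX x)
    (hfin : (ζY y).Finite) (hbot : ∃ y₁ : Y, ζY y₁ = ⊥) :
    ∃ f : X → Y, Continuous f ∧ (∀ a : X, ζY (f a) ≤ ζX a) ∧ f x = y :=
  exists_multiset_morphism_general ζX ζY hζX x y hxy hfin hbot
end

section
/- Let X, X' be multisets and f₁, f₂ : X → X' two distinct morphisms of multisets. Then there exists a morphism g : X' → 𝟚 such that g ∘ f₁ ≠ g ∘ f₂, where 𝟚 is the two-element discrete multiset with both denominators equal to ν₁. (That is, 𝟚 is a cogenerator in the category of multisets.) -/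
/-- The two-element multiset `𝟚` (here modelled on `Bool` with the discrete
topology and both denominators equal to `ν₁ = ⊥`) separates any two distinct
morphisms of multisets: `𝟚` is a cogenerator in the category of multisets. -/
theorem two_is_cogenerator {X X' : Type*}
    [TopologicalSpace X] [CompactSpace X] [T2Space X] [TotallyDisconnectedSpace X]
    [TopologicalSpace X'] [CompactSpace X'] [T2Space X'] [TotallyDisconnectedSpace X']
    (ζX : X → Supernatural) (ζX' : X' → Supernatural)
    (hζX : @Continuous X Supernatural _ supernaturalTopology ζX)
    (hζX' : @Continuous X' Supernatural _ supernaturalTopology ζX')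
    (f₁ f₂ : X → X') (hf₁c : Continuous f₁) (hf₂c : Continuous f₂)
    (hf₁d : ∀ x, ζX' (f₁ x) ≤ ζX x) (hf₂d : ∀ x, ζX' (f₂ x) ≤ ζX x)
    (hne : f₁ ≠ f₂) :
    ∃ g : X' → Bool, Continuous g ∧ (∀ x' : X', (⊥ : Supernatural) ≤ ζX' x') ∧
      g ∘ f₁ ≠ g ∘ f₂ := by
  obtain ⟨x, hx⟩ : ∃ x, f₁ x ≠ f₂ x := by
    by_contra h
    push_neg at h
    exact hne (funext h)
  haveI : TotallySeparatedSpace X' := loc_compact_t2_tot_disc_iff_tot_sep.mp ‹_›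
  obtain ⟨U, hU, hx1, hx2⟩ := exists_isClopen_of_totally_separated hx
  refine ⟨U.boolIndicator, (continuous_boolIndicator_iff_isClopen U).mpr hU,
    fun _ => bot_le, fun h => ?_⟩
  have h1 := congrFun h x
  simp only [Function.comp_apply] at h1
  rw [(U.mem_iff_boolIndicator _).mp hx1, Eq.comm,
    ← U.mem_iff_boolIndicator] at h1
  exact hx2 h1
end
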